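/- arXiv:1810.08792 — 3 statements merged into one kernel-verified Lean document; each statement's English description precedes it below -/
import Mathlib

section
/- For every integer k ≥ 1, the subgraph C_k of complete lines of the Sierpiński graph Γ_k satisfies cut^{1/2}(C_k) ≥ 2^{k−1}; that is, for every set T of vertices of C_k with |T| < 2^{k−1}, the graph C_k − T has a connected component with more than |C_k|/2 vertices. -/
/-!
A vertical line `V_x` of `Γ_k` is complete exactly when `x` has no ternary digit `1`: if
`x_i = 1`, the missing point `(x, 3^i)` separates `(x, 0)` from `(x, 2·3^i)`. By symmetry the
same holds for horizontal lines, so `C_k` is the union of `2^k` full columns and `2^k` full rows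
of the `3^k × 3^k` grid. A set `T` of fewer than `2^(k-1)` vertices meets fewer than `2^(k-1)` of
these columns and of these rows. The untouched ones form a connected subgraph, since every
untouched column crosses every untouched row, and counting shows that it contains more than half
of the vertices of `C_k`.
-/

open scoped Classical

/-- Reachability within the subgraph of `X` induced on a vertex set `s`. -/
def SimpleGraph.ReachIn {V : Type*} (X : SimpleGraph V) (s : Set V) (v w : V) : Prop :=
  ∃ (hv : v ∈ s) (hw : w ∈ s), (X.induce s).Reachable ⟨v, hv⟩ ⟨w, hw⟩

/-- The vertex set of the connected component of `v` in the subgraph of `X` induced on `s`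
(empty if `v ∉ s`). -/
def SimpleGraph.compIn {V : Type*} (X : SimpleGraph V) (s : Set V) (v : V) : Set V :=
  {w | X.ReachIn s v w}

/-- `T` is a vertex set witnessing `cut¹ᐟ²` for the subgraph of `X` induced on the finite
vertex set `G`: after removing `T` from `G`, every connected component has at most
`|G|/2` vertices. -/
def IsHalfCutSet {V : Type*} (X : SimpleGraph V) (G T : Finset V) : Prop :=
  T ⊆ G ∧ ∀ v : V, 2 * (X.compIn (↑(G \ T)) v).ncard ≤ G.card

/-- `cut¹ᐟ²` of the subgraph of `X` induced on the finite vertex set `G`: the least size of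
a vertex set whose removal leaves all connected components of size at most `|G|/2`. -/
noncomputable def cutHalf {V : Type*} (X : SimpleGraph V) (G : Finset V) : ℕ :=
  sInf {t | ∃ T : Finset V, IsHalfCutSet X G T ∧ T.card = t}

/-- The `1/2`-separation profile of `X`, over finite subgraphs with vertex set inside `W`. -/
noncomputable def sepHalf {V : Type*} (X : SimpleGraph V) (W : Set V) (n : ℕ) : ℕ :=
  sSup {c | ∃ G : Finset V, ↑G ⊆ W ∧ G.card ≤ n ∧ c = cutHalf X G}

/-- The `i`-th digit of `x` in base `b`. -/
def digit (b i x : ℕ) : ℕ := x / b ^ i % b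

/-- Membership in the vertex set of the infinite Sierpinski graph: no position at which
both coordinates have base-3 digit `1`. -/
def SierpMem (p : ℕ × ℕ) : Prop :=
  ∀ i : ℕ, ¬(digit 3 i p.1 = 1 ∧ digit 3 i p.2 = 1)

/-- The infinite Sierpinski graph `S`, with edges between valid points at `ℓ¹`-distance 1. -/
def SierpGraph : SimpleGraph (ℕ × ℕ) where
  Adj p q := SierpMem p ∧ SierpMem q ∧ |(p.1 : ℤ) - q.1| + |(p.2 : ℤ) - q.2| = 1
  symm := ⟨by
    rintro p q ⟨hp, hq, h⟩
    exact ⟨hq, hp, by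
      rw [abs_sub_comm (q.1 : ℤ) (p.1 : ℤ), abs_sub_comm (q.2 : ℤ) (p.2 : ℤ)]; exact h⟩⟩
  loopless := ⟨by rintro p ⟨-, -, h⟩; simp at h⟩

/-- The vertex set of the sphere `Γ_k`. -/
noncomputable def GammaV (k : ℕ) : Finset (ℕ × ℕ) :=
  (Finset.range (3 ^ k) ×ˢ Finset.range (3 ^ k)).filter SierpMem

/-- The intersection of the vertical line `V_x` with `Γ_k`. -/
def VlineSet (k x : ℕ) : Set (ℕ × ℕ) := {p | p ∈ GammaV k ∧ p.1 = x}

/-- The intersection of the horizontal line `H_y` with `Γ_k`. -/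
def HlineSet (k y : ℕ) : Set (ℕ × ℕ) := {p | p ∈ GammaV k ∧ p.2 = y}

/-- The vertical line `V_x` is complete in `Γ_k`: its intersection with `Γ_k` is connected. -/
def CompleteV (k x : ℕ) : Prop := (SierpGraph.induce (VlineSet k x)).Connected

/-- The horizontal line `H_y` is complete in `Γ_k`: its intersection with `Γ_k` is connected. -/
def CompleteH (k y : ℕ) : Prop := (SierpGraph.induce (HlineSet k y)).Connected

/-- The vertex set of the complete-lines subgraph `C_k` of `Γ_k`. -/
noncomputable def CkV (k : ℕ) : Finset (ℕ × ℕ) :=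
  (GammaV k).filter fun p => CompleteV k p.1 ∨ CompleteH k p.2

namespace SimpleGraph

variable {V : Type*} {X : SimpleGraph V} {s : Set V} {u v w : V}

lemma ReachIn.symm (h : X.ReachIn s v w) : X.ReachIn s w v :=
  let ⟨hv, hw, r⟩ := h; ⟨hw, hv, r.symm⟩

lemma ReachIn.trans (h₁ : X.ReachIn s u v) (h₂ : X.ReachIn s v w) : X.ReachIn s u w :=
  let ⟨hu, _, r₁⟩ := h₁; let ⟨_, hw, r₂⟩ := h₂; ⟨hu, hw, r₁.trans r₂⟩

lemma reachIn_refl (hv : v ∈ s) : X.ReachIn s v v := ⟨hv, hv, Reachable.refl _⟩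

lemma Adj.reachIn (h : X.Adj v w) (hv : v ∈ s) (hw : w ∈ s) : X.ReachIn s v w :=
  ⟨hv, hw, Adj.reachable (induce_adj.mpr h)⟩

lemma reachIn_of_chain (f : ℕ → V) {N : ℕ} (hs : ∀ n < N, f n ∈ s)
    (hadj : ∀ n, n + 1 < N → X.Adj (f n) (f (n + 1))) {a b : ℕ} (ha : a < N) (hb : b < N) :
    X.ReachIn s (f a) (f b) := by
  suffices h : ∀ a < N, X.ReachIn s (f a) (f 0) from (h a ha).trans (h b hb).symm
  intro a ha
  induction a with
  | zero => exact reachIn_refl (hs 0 ha)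
  | succ n ih =>
    exact ((hadj n ha).symm.reachIn (hs _ ha) (hs n (by omega))).trans (ih (by omega))

lemma ReachIn.preserves_of_adj {P : V → Prop}
    (hP : ∀ v w, v ∈ s → w ∈ s → X.Adj v w → P v → P w) (h : X.ReachIn s v w) (hv : P v) :
    P w := by
  obtain ⟨hv', hw', r⟩ := h
  suffices key : ∀ b : s, Relation.ReflTransGen (X.induce s).Adj ⟨v, hv'⟩ b → P b from
    key ⟨w, hw'⟩ ((reachable_iff_reflTransGen _ _).mp r)
  intro b rb
  induction rb with
  | refl => exact hv
  | tail _ hadj ih => exact hP _ _ (Subtype.prop _) (Subtype.prop _) (induce_adj.mp hadj) ih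

lemma connected_induce_iff_reachIn :
    (X.induce s).Connected ↔ s.Nonempty ∧ ∀ v ∈ s, ∀ w ∈ s, X.ReachIn s v w := by
  rw [connected_iff, Set.nonempty_coe_sort, and_comm]
  refine and_congr_right fun _ => ⟨fun h v hv w hw => ⟨hv, hw, h _ _⟩, fun h v w => ?_⟩
  obtain ⟨_, _, r⟩ := h v v.2 w w.2
  exact r

lemma compIn_subset : X.compIn s v ⊆ s := fun _ ⟨_, hw, _⟩ => hw

end SimpleGraph

lemma isHalfCutSet_self {V : Type*} (X : SimpleGraph V) (G : Finset V) : IsHalfCutSet X G G := by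
  refine ⟨subset_rfl, fun v => ?_⟩
  have : X.compIn (↑(G \ G)) v = ∅ := by
    rw [Finset.sdiff_self, Finset.coe_empty]
    exact Set.subset_empty_iff.mp SimpleGraph.compIn_subset
  rw [this, Set.ncard_empty]
  exact Nat.zero_le _

lemma le_cutHalf {V : Type*} [DecidableEq V] {X : SimpleGraph V} {G : Finset V} {c : ℕ}
    (h : ∀ T ⊆ G, T.card < c → ∃ v, G.card < 2 * (X.compIn ↑(G \ T) v).ncard) :
    c ≤ cutHalf X G := by
  refine le_csInf ⟨_, G, isHalfCutSet_self X G, rfl⟩ ?_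
  rintro _ ⟨T, ⟨hTG, hT⟩, rfl⟩
  by_contra! hlt
  obtain ⟨v, hv⟩ := h T hTG hlt
  -- `hv` and `hT v` differ only in the `DecidableEq` instance behind `G \ T`
  exact (hT v).not_gt (lt_of_lt_of_eq hv (by congr!))

lemma digit_zero (b x : ℕ) : digit b 0 x = x % b := by simp [digit]

lemma digit_succ (b i x : ℕ) : digit b (i + 1) x = digit b i (x / b) := by
  rw [digit, digit, Nat.div_div_eq_div_mul, pow_succ']

lemma digit_eq_zero_of_lt {b i x : ℕ} (h : x < b ^ i) : digit b i x = 0 := by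
  simp [digit, Nat.div_eq_of_lt h]

lemma digit_pow_self {b : ℕ} (hb : 1 < b) (i : ℕ) : digit b i (b ^ i) = 1 := by
  simp [digit, Nat.div_self (pow_pos (zero_lt_one.trans hb) i), Nat.mod_eq_of_lt hb]

noncomputable def ternaryCantor (k : ℕ) : Finset ℕ :=
  (Finset.range (3 ^ k)).filter fun x => ∀ i, digit 3 i x ≠ 1

lemma mem_ternaryCantor {k x : ℕ} : x ∈ ternaryCantor k ↔ x < 3 ^ k ∧ ∀ i, digit 3 i x ≠ 1 := by
  simp [ternaryCantor]

lemma lt_of_mem_ternaryCantor {k x : ℕ} (hx : x ∈ ternaryCantor k) : x < 3 ^ k :=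
  (mem_ternaryCantor.mp hx).1

lemma zero_mem_ternaryCantor (k : ℕ) : 0 ∈ ternaryCantor k :=
  mem_ternaryCantor.mpr ⟨by positivity, fun i => by simp [digit]⟩

lemma mem_ternaryCantor_succ {k x : ℕ} :
    x ∈ ternaryCantor (k + 1) ↔ x % 3 ≠ 1 ∧ x / 3 ∈ ternaryCantor k := by
  simp only [mem_ternaryCantor, pow_succ, ← Nat.div_lt_iff_lt_mul (by norm_num : 0 < 3)]
  constructor
  · rintro ⟨hlt, hd⟩
    exact ⟨digit_zero 3 x ▸ hd 0, hlt, fun i => digit_succ 3 i x ▸ hd (i + 1)⟩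
  · rintro ⟨h0, hlt, hd⟩
    refine ⟨hlt, fun i => ?_⟩
    cases i with
    | zero => exact digit_zero 3 x ▸ h0
    | succ i => exact digit_succ 3 i x ▸ hd i

lemma ternaryCantor_succ (k : ℕ) :
    ternaryCantor (k + 1) =
      (ternaryCantor k).image (3 * ·) ∪ (ternaryCantor k).image (3 * · + 2) := by
  ext x
  simp only [mem_ternaryCantor_succ, Finset.mem_union, Finset.mem_image]
  constructor
  · rintro ⟨h0, hx⟩
    rcases (by omega : x % 3 = 0 ∨ x % 3 = 2) with h | h
    · exact .inl ⟨x / 3, hx, by omega⟩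
    · exact .inr ⟨x / 3, hx, by omega⟩
  · rintro (⟨y, hy, rfl⟩ | ⟨y, hy, rfl⟩)
    · exact ⟨by omega, by rwa [Nat.mul_div_cancel_left _ (by norm_num)]⟩
    · exact ⟨by omega, by rwa [show (3 * y + 2) / 3 = y by omega]⟩

lemma card_ternaryCantor (k : ℕ) : (ternaryCantor k).card = 2 ^ k := by
  induction k with
  | zero =>
    refine Finset.card_eq_one.mpr ⟨0, Finset.eq_singleton_iff_unique_mem.mpr
      ⟨zero_mem_ternaryCantor 0, fun x hx => ?_⟩⟩
    simpa using lt_of_mem_ternaryCantor hx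
  | succ k ih =>
    have hdisj : Disjoint ((ternaryCantor k).image (3 * ·))
        ((ternaryCantor k).image (3 * · + 2)) := by
      simp only [Finset.disjoint_left, Finset.mem_image]
      rintro _ ⟨a, -, rfl⟩ ⟨b, -, h⟩
      omega
    rw [ternaryCantor_succ, Finset.card_union_of_disjoint hdisj,
      Finset.card_image_of_injective _ (fun a b h => by simpa using h),
      Finset.card_image_of_injective _ (fun a b h => by simpa using h), ih, pow_succ]
    ring

lemma ternaryCantor_mono {i k : ℕ} (h : i ≤ k) : ternaryCantor i ⊆ ternaryCantor k := by
  intro x hx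
  rw [mem_ternaryCantor] at hx ⊢
  exact ⟨hx.1.trans_le (Nat.pow_le_pow_right (by norm_num) h), hx.2⟩

lemma two_mul_pow_mem_ternaryCantor (i : ℕ) : 2 * 3 ^ i ∈ ternaryCantor (i + 1) := by
  induction i with
  | zero => exact mem_ternaryCantor_succ.mpr ⟨by norm_num, zero_mem_ternaryCantor 0⟩
  | succ i ih =>
    rw [mem_ternaryCantor_succ]
    refine ⟨by rw [pow_succ]; omega, ?_⟩
    rwa [pow_succ, ← mul_assoc, Nat.mul_div_cancel _ (by norm_num)]

lemma sierpMem_of_fst_mem {k x : ℕ} (hx : x ∈ ternaryCantor k) (y : ℕ) : SierpMem (x, y) :=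
  fun i h => (mem_ternaryCantor.mp hx).2 i h.1

lemma sierpMem_of_snd_mem {k y : ℕ} (hy : y ∈ ternaryCantor k) (x : ℕ) : SierpMem (x, y) :=
  fun i h => (mem_ternaryCantor.mp hy).2 i h.2

lemma sierpMem_swap {p : ℕ × ℕ} : SierpMem p.swap ↔ SierpMem p :=
  forall_congr' fun _ => not_congr and_comm

lemma mem_GammaV {k : ℕ} {p : ℕ × ℕ} :
    p ∈ GammaV k ↔ p.1 < 3 ^ k ∧ p.2 < 3 ^ k ∧ SierpMem p := by
  simp [GammaV, and_assoc]

lemma swap_mem_GammaV {k : ℕ} {p : ℕ × ℕ} : p.swap ∈ GammaV k ↔ p ∈ GammaV k := by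
  simp only [mem_GammaV, sierpMem_swap, Prod.fst_swap, Prod.snd_swap, ← and_assoc, and_comm]

lemma sierpGraph_adj_vertical {x y : ℕ} (h₁ : SierpMem (x, y)) (h₂ : SierpMem (x, y + 1)) :
    SierpGraph.Adj (x, y) (x, y + 1) :=
  ⟨h₁, h₂, by simp⟩

lemma sierpGraph_adj_horizontal {x y : ℕ} (h₁ : SierpMem (x, y)) (h₂ : SierpMem (x + 1, y)) :
    SierpGraph.Adj (x, y) (x + 1, y) :=
  ⟨h₁, h₂, by simp⟩

def sierpSwap : SierpGraph ≃g SierpGraph where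
  toEquiv := Equiv.prodComm ℕ ℕ
  map_rel_iff' {p q} := by
    simp only [Equiv.prodComm_apply, SierpGraph, Prod.fst_swap, Prod.snd_swap, sierpMem_swap,
      add_comm |((p.2 : ℤ) - q.2)|]

lemma reachIn_column {k x : ℕ} {s : Set (ℕ × ℕ)} (hx : x ∈ ternaryCantor k)
    (hs : ∀ y < 3 ^ k, (x, y) ∈ s) {a b : ℕ} (ha : a < 3 ^ k) (hb : b < 3 ^ k) :
    SierpGraph.ReachIn s (x, a) (x, b) :=
  SimpleGraph.reachIn_of_chain (fun y => (x, y)) hs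
    (fun n _ => sierpGraph_adj_vertical (sierpMem_of_fst_mem hx n) (sierpMem_of_fst_mem hx _))
    ha hb

lemma reachIn_row {k y : ℕ} {s : Set (ℕ × ℕ)} (hy : y ∈ ternaryCantor k)
    (hs : ∀ x < 3 ^ k, (x, y) ∈ s) {a b : ℕ} (ha : a < 3 ^ k) (hb : b < 3 ^ k) :
    SierpGraph.ReachIn s (a, y) (b, y) :=
  SimpleGraph.reachIn_of_chain (fun x => (x, y)) hs
    (fun n _ => sierpGraph_adj_horizontal (sierpMem_of_snd_mem hy n) (sierpMem_of_snd_mem hy _))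
    ha hb

lemma completeV_of_mem {k x : ℕ} (hx : x ∈ ternaryCantor k) : CompleteV k x := by
  have hline : ∀ y < 3 ^ k, (x, y) ∈ VlineSet k x := fun y hy =>
    ⟨mem_GammaV.mpr ⟨lt_of_mem_ternaryCantor hx, hy, sierpMem_of_fst_mem hx y⟩, rfl⟩
  refine SimpleGraph.connected_induce_iff_reachIn.mpr ⟨⟨_, hline 0 (by positivity)⟩, ?_⟩
  rintro ⟨_, a⟩ ⟨ha, rfl⟩ ⟨_, b⟩ ⟨hb, rfl⟩
  exact reachIn_column hx hline (mem_GammaV.mp ha).2.1 (mem_GammaV.mp hb).2.1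

lemma mem_of_completeV {k x : ℕ} (h : CompleteV k x) : x ∈ ternaryCantor k := by
  obtain ⟨⟨p, hpΓ, hpx⟩, hreach⟩ := SimpleGraph.connected_induce_iff_reachIn.mp h
  have hxk : x < 3 ^ k := hpx ▸ (mem_GammaV.mp hpΓ).1
  refine mem_ternaryCantor.mpr ⟨hxk, fun i hi => ?_⟩
  have hik : i < k := by
    by_contra! hki
    rw [digit_eq_zero_of_lt (hxk.trans_le (Nat.pow_le_pow_right (by norm_num) hki))] at hi
    exact zero_ne_one hi
  have hmem : ∀ y ∈ ternaryCantor k, (x, y) ∈ VlineSet k x := fun y hy =>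
    ⟨mem_GammaV.mpr ⟨hxk, lt_of_mem_ternaryCantor hy, sierpMem_of_snd_mem hy x⟩, rfl⟩
  have hbelow : ∀ v w, v ∈ VlineSet k x → w ∈ VlineSet k x → SierpGraph.Adj v w →
      v.2 < 3 ^ i → w.2 < 3 ^ i := by
    rintro ⟨_, a⟩ ⟨_, b⟩ ⟨-, rfl⟩ ⟨hb, hbx⟩ ⟨-, -, hadj⟩ ha
    subst hbx
    have hb_ne : b ≠ 3 ^ i := by
      rintro rfl
      exact (mem_GammaV.mp hb).2.2 i ⟨hi, digit_pow_self (by norm_num) i⟩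
    simp only [sub_self, abs_zero, zero_add] at hadj
    have := abs_eq (zero_le_one' ℤ) |>.mp hadj
    omega
  have := (hreach _ (hmem 0 (zero_mem_ternaryCantor k)) _
    (hmem _ (ternaryCantor_mono hik (two_mul_pow_mem_ternaryCantor i)))).preserves_of_adj
    hbelow (pow_pos (by norm_num) i)
  omega

lemma completeV_iff {k x : ℕ} : CompleteV k x ↔ x ∈ ternaryCantor k :=
  ⟨mem_of_completeV, completeV_of_mem⟩

lemma completeH_iff_completeV {k y : ℕ} : CompleteH k y ↔ CompleteV k y :=
  (sierpSwap.induce (s := HlineSet k y) (t := VlineSet k y)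
    (sierpSwap.toEquiv.bijOn fun _ => and_congr swap_mem_GammaV Iff.rfl)).connected_iff

lemma card_le_card_sdiff_image_add {α β : Type*} [DecidableEq α] (D : Finset α)
    (T : Finset β) (f : β → α) : D.card ≤ (D \ T.image f).card + T.card := by
  have := Finset.le_card_sdiff (T.image f) D
  have := Finset.card_image_le (s := T) (f := f)
  omega

def gridLines (X Y : Finset ℕ) (n : ℕ) : Finset (ℕ × ℕ) :=
  X ×ˢ Finset.range n ∪ Finset.range n ×ˢ Y

lemma card_gridLines {X Y : Finset ℕ} {n : ℕ} (hX : X ⊆ Finset.range n)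
    (hY : Y ⊆ Finset.range n) :
    (gridLines X Y n).card + X.card * Y.card = X.card * n + n * Y.card := by
  have := Finset.card_union_add_card_inter (X ×ˢ Finset.range n) (Finset.range n ×ˢ Y)
  rwa [Finset.product_inter_product, Finset.inter_eq_left.mpr hX, Finset.inter_eq_right.mpr hY,
    Finset.card_product, Finset.card_product, Finset.card_product, Finset.card_range] at this

lemma gridLines_mono {X X' Y Y' : Finset ℕ} (hX : X ⊆ X') (hY : Y ⊆ Y') (n : ℕ) :
    gridLines X Y n ⊆ gridLines X' Y' n :=
  Finset.union_subset_union (Finset.product_subset_product_left hX)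
    (Finset.product_subset_product_right hY)

lemma card_lt_two_mul_card_gridLines {D X Y : Finset ℕ} {n t : ℕ} (hD : D ⊆ Finset.range n)
    (hX : X ⊆ D) (hY : Y ⊆ D) (hXt : D.card ≤ X.card + t) (hYt : D.card ≤ Y.card + t)
    (ht : 2 * t < D.card) :
    (gridLines D D n).card < 2 * (gridLines X Y n).card := by
  have hDD := card_gridLines hD hD
  have hXY := card_gridLines (hX.trans hD) (hY.trans hD)
  have hDn : D.card ≤ n := by simpa using Finset.card_le_card hD
  have hXD := Finset.card_le_card hX
  have hYD := Finset.card_le_card hY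
  zify at *
  nlinarith [mul_le_mul (by linarith : (D.card : ℤ) - X.card ≤ t)
    (by linarith : (D.card : ℤ) - Y.card ≤ t) (by linarith) (by positivity)]

lemma CkV_eq_gridLines (k : ℕ) :
    CkV k = gridLines (ternaryCantor k) (ternaryCantor k) (3 ^ k) := by
  ext ⟨x, y⟩
  simp only [CkV, gridLines, Finset.mem_filter, Finset.mem_union, Finset.mem_product,
    Finset.mem_range, mem_GammaV, completeH_iff_completeV, completeV_iff]
  constructor
  · rintro ⟨⟨hx, hy, -⟩, h | h⟩
    exacts [.inl ⟨h, hy⟩, .inr ⟨hx, h⟩]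
  · rintro (⟨h, hy⟩ | ⟨hx, h⟩)
    · exact ⟨⟨lt_of_mem_ternaryCantor h, hy, sierpMem_of_fst_mem h y⟩, .inl h⟩
    · exact ⟨⟨hx, lt_of_mem_ternaryCantor h, sierpMem_of_snd_mem h x⟩, .inr h⟩

lemma gridLines_subset_compIn {k x₀ y₀ : ℕ} {X Y : Finset ℕ} {s : Set (ℕ × ℕ)}
    (hX : X ⊆ ternaryCantor k) (hY : Y ⊆ ternaryCantor k) (hs : ↑(gridLines X Y (3 ^ k)) ⊆ s)
    (hx₀ : x₀ ∈ X) (hy₀ : y₀ ∈ Y) :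
    ↑(gridLines X Y (3 ^ k)) ⊆ SierpGraph.compIn s (x₀, y₀) := by
  have hcol : ∀ x ∈ X, ∀ y < 3 ^ k, (x, y) ∈ s := fun x hx y hy =>
    hs (Finset.mem_union_left _ (Finset.mem_product.mpr ⟨hx, Finset.mem_range.mpr hy⟩))
  have hrow : ∀ y ∈ Y, ∀ x < 3 ^ k, (x, y) ∈ s := fun y hy x hx =>
    hs (Finset.mem_union_right _ (Finset.mem_product.mpr ⟨Finset.mem_range.mpr hx, hy⟩))
  have hx₀k := lt_of_mem_ternaryCantor (hX hx₀)
  have hy₀k := lt_of_mem_ternaryCantor (hY hy₀)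
  rintro ⟨x, y⟩ hp
  simp only [gridLines, Finset.coe_union, Finset.coe_product, Finset.coe_range, Set.mem_union,
    Set.mem_prod, Finset.mem_coe, Set.mem_Iio] at hp
  rcases hp with ⟨hx, hy⟩ | ⟨hx, hy⟩
  · exact ((reachIn_column (hX hx) (hcol x hx) hy hy₀k).trans
      (reachIn_row (hY hy₀) (hrow y₀ hy₀) (lt_of_mem_ternaryCantor (hX hx)) hx₀k)).symm
  · exact ((reachIn_row (hY hy) (hrow y hy) hx hx₀k).trans
      (reachIn_column (hX hx₀) (hcol x₀ hx₀) (lt_of_mem_ternaryCantor (hY hy)) hy₀k)).symm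

lemma exists_large_component (k : ℕ) (T : Finset (ℕ × ℕ)) (hT : 2 * T.card < 2 ^ k) :
    ∃ v ∈ CkV k \ T,
      (CkV k).card < 2 * (SierpGraph.compIn (↑(CkV k \ T)) v).ncard := by
  set X := ternaryCantor k \ T.image Prod.fst
  set Y := ternaryCantor k \ T.image Prod.snd
  have hXt : (ternaryCantor k).card ≤ X.card + T.card := card_le_card_sdiff_image_add _ _ _
  have hYt : (ternaryCantor k).card ≤ Y.card + T.card := card_le_card_sdiff_image_add _ _ _
  have hD : (ternaryCantor k).card = 2 ^ k := card_ternaryCantor k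
  obtain ⟨x₀, hx₀⟩ : X.Nonempty := Finset.card_pos.mp (by omega)
  obtain ⟨y₀, hy₀⟩ : Y.Nonempty := Finset.card_pos.mp (by omega)
  have hsub : gridLines X Y (3 ^ k) ⊆ CkV k \ T := by
    refine Finset.subset_sdiff.mpr ⟨?_, ?_⟩
    · rw [CkV_eq_gridLines]
      exact gridLines_mono Finset.sdiff_subset Finset.sdiff_subset _
    · simp only [gridLines, Finset.disjoint_left, Finset.mem_union, Finset.mem_product]
      rintro p (⟨hp, -⟩ | ⟨-, hp⟩) hpT <;>
        exact (Finset.mem_sdiff.mp hp).2 (Finset.mem_image_of_mem _ hpT)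
  have hcomp := gridLines_subset_compIn Finset.sdiff_subset Finset.sdiff_subset
    (Finset.coe_subset.mpr hsub) hx₀ hy₀
  have hcomp_finite : (SierpGraph.compIn (↑(CkV k \ T)) (x₀, y₀)).Finite :=
    (CkV k \ T).finite_toSet.subset SimpleGraph.compIn_subset
  refine ⟨(x₀, y₀), hsub (Finset.mem_union_left _ (Finset.mem_product.mpr
    ⟨hx₀, Finset.mem_range.mpr (lt_of_mem_ternaryCantor (Finset.sdiff_subset hy₀))⟩)), ?_⟩
  calc (CkV k).card < 2 * (gridLines X Y (3 ^ k)).card := by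
        rw [CkV_eq_gridLines]
        exact card_lt_two_mul_card_gridLines
          (fun x hx => Finset.mem_range.mpr (lt_of_mem_ternaryCantor hx))
          Finset.sdiff_subset Finset.sdiff_subset hXt hYt (by omega)
    _ = 2 * (↑(gridLines X Y (3 ^ k)) : Set (ℕ × ℕ)).ncard := by rw [Set.ncard_coe_finset]
    _ ≤ 2 * (SierpGraph.compIn (↑(CkV k \ T)) (x₀, y₀)).ncard :=
        Nat.mul_le_mul_left 2 (Set.ncard_le_ncard hcomp hcomp_finite)

lemma two_mul_lt_two_pow_of_lt_two_pow_pred {t k : ℕ} (h : t < 2 ^ (k - 1)) : 2 * t < 2 ^ k := by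
  cases k with
  | zero => simp_all
  | succ k => rw [pow_succ]; simp only [Nat.add_sub_cancel] at h; omega

theorem sierpinski_complete_lines_cut_general (k : ℕ) :
    2 ^ (k - 1) ≤ cutHalf SierpGraph (CkV k) ∧
    ∀ T : Finset (ℕ × ℕ), T ⊆ CkV k → T.card < 2 ^ (k - 1) →
      ∃ v ∈ CkV k \ T,
        (CkV k).card < 2 * (SierpGraph.compIn (↑(CkV k \ T)) v).ncard := by
  have hlarge (T : Finset (ℕ × ℕ)) (hT : T.card < 2 ^ (k - 1)) :=
    exists_large_component k T (two_mul_lt_two_pow_of_lt_two_pow_pred hT)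
  exact ⟨le_cutHalf fun T _ hT => (hlarge T hT).imp fun _ h => h.2, fun T _ => hlarge T⟩

/-- For every `k ≥ 1`, the complete-lines subgraph `C_k` of `Γ_k` satisfies
`cut¹ᐟ²(C_k) ≥ 2^(k-1)`: for every vertex set `T` of `C_k` with `|T| < 2^(k-1)`,
`C_k − T` has a connected component with more than `|C_k|/2` vertices. -/
theorem sierpinski_complete_lines_cut (k : ℕ) (hk : 1 ≤ k) :
    2 ^ (k - 1) ≤ cutHalf SierpGraph (CkV k) ∧
    ∀ T : Finset (ℕ × ℕ), T ⊆ CkV k → T.card < 2 ^ (k - 1) →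
      ∃ v ∈ CkV k \ T,
        (CkV k).card < 2 * (SierpGraph.compIn (↑(CkV k \ T)) v).ncard :=
  sierpinski_complete_lines_cut_general k
end

section
/- Let Γ be a connected finite graph on n vertices, and for every ordered pair of vertices (i,j) of Γ let P_{i,j} be a path in Γ from i to j. Let m = max over vertices v of the number of ordered pairs (i,j) such that v lies on P_{i,j}. Then every vertex set C of Γ with |C| ≤ n/4 such that every connected component of Γ − C has at most n/2 vertices satisfies |C| ≥ n²/(8m). In particular, if cut^{1/2}(Γ) ≤ n/4 then cut^{1/2}(Γ) ≥ n²/(8m). -/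
open scoped Classical

private lemma reachIn_of_walk {V : Type*} (X : SimpleGraph V) (s : Set V) {i j : V}
    (w : X.Walk i j) (h : ∀ v ∈ w.support, v ∈ s) : X.ReachIn s i j := by
  induction w with
  | nil => exact ⟨h _ (by simp), h _ (by simp), SimpleGraph.Reachable.refl _⟩
  | @cons a b c hadj p ih =>
    obtain ⟨hb, hj, hr⟩ := ih (fun v hv => h v (by simp [hv]))
    have hi : a ∈ s := h _ (by simp)
    exact ⟨hi, hj, SimpleGraph.Reachable.trans
      (SimpleGraph.Adj.reachable (show (X.induce s).Adj ⟨a, hi⟩ ⟨b, hb⟩ from hadj)) hr⟩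

/-- If `Γ` is a connected graph on `n` vertices, `P i j` is a path from `i` to `j` for every
ordered pair of vertices, and `m` is the maximal number of ordered pairs `(i,j)` whose path
passes through a single vertex, then every vertex set `C` with `|C| ≤ n/4` all of whose
removal leaves components of size at most `n/2` satisfies `|C| ≥ n²/(8m)`; in particular if
`cut¹ᐟ²(Γ) ≤ n/4` then `cut¹ᐟ²(Γ) ≥ n²/(8m)`. -/
theorem paths_cut_bound {V : Type*} [Fintype V] (X : SimpleGraph V)
    (hX : X.Connected) (P : ∀ i j : V, X.Walk i j) (hP : ∀ i j : V, (P i j).IsPath)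
    (m : ℕ)
    (hm : m = Finset.univ.sup fun v : V =>
      (Finset.univ.filter fun ij : V × V => v ∈ (P ij.1 ij.2).support).card) :
    (∀ C : Finset V, 4 * C.card ≤ Fintype.card V →
        (∀ v : V, 2 * (X.compIn (↑(Finset.univ \ C)) v).ncard ≤ Fintype.card V) →
        (Fintype.card V : ℝ) ^ 2 / (8 * m) ≤ C.card) ∧
    (4 * cutHalf X Finset.univ ≤ Fintype.card V →
      (Fintype.card V : ℝ) ^ 2 / (8 * m) ≤ cutHalf X Finset.univ) := by
  classical
  have main : ∀ C : Finset V, 4 * C.card ≤ Fintype.card V →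
      (∀ v : V, 2 * (X.compIn (↑(Finset.univ \ C)) v).ncard ≤ Fintype.card V) →
      (Fintype.card V : ℝ) ^ 2 / (8 * m) ≤ C.card := by
    intro C hC4 hcomp
    rcases Nat.eq_zero_or_pos m with hm0 | hmpos
    · simp [hm0]
    set n := Fintype.card V with hn
    set S : Finset V := Finset.univ \ C with hS
    have hSC : S.card + C.card = n := by
      have h1 : C.card ≤ n := by rw [hn, ← Finset.card_univ]; exact Finset.card_le_univ C
      rw [hS, Finset.card_sdiff_of_subset (Finset.subset_univ C), Finset.card_univ, ← hn]
      omega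
    set B : Finset (V × V) :=
      (S ×ˢ S).filter (fun ij => ¬ X.ReachIn ↑S ij.1 ij.2) with hB
    have hBcard : B.card = ∑ i ∈ S, (S.filter fun j => ¬ X.ReachIn ↑S i j).card := by
      rw [hB, Finset.card_filter, Finset.sum_product]
      simp [Finset.card_filter]
    -- lower bound
    have hlow : 2 * (S.card * S.card) ≤ 2 * B.card + S.card * n := by
      have h1 : ∀ i ∈ S, 2 * S.card ≤
          2 * (S.filter fun j => ¬ X.ReachIn ↑S i j).card + n := by
        intro i hi
        have hset : X.compIn (↑S) i = ↑(S.filter fun j => X.ReachIn ↑S i j) := by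
          ext w
          simp only [SimpleGraph.compIn, Set.mem_setOf_eq, Finset.coe_filter,
            Set.mem_setOf_eq]
          constructor
          · intro hr
            exact ⟨by rcases hr with ⟨_, hw, _⟩; exact hw, hr⟩
          · exact fun h => h.2
        have hc := hcomp i
        rw [hS] at hset
        rw [hset, Set.ncard_coe_finset] at hc
        have hsplit := Finset.card_filter_add_card_filter_not
          (s := S) (p := fun j => X.ReachIn ↑S i j)
        rw [← hS] at hc
        omega
      have h2 := Finset.sum_le_sum h1
      simp only [Finset.sum_add_distrib, Finset.sum_const, smul_eq_mul,
        ← Finset.mul_sum] at h2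
      rw [hBcard]
      nlinarith [h2]
    -- upper bound
    have hup : B.card ≤ C.card * m := by
      have hsub : B ⊆ C.biUnion fun v =>
          Finset.univ.filter fun ij : V × V => v ∈ (P ij.1 ij.2).support := by
        intro ij hij
        rw [hB, Finset.mem_filter, Finset.mem_product] at hij
        obtain ⟨⟨hi, hj⟩, hnr⟩ := hij
        by_contra hcon
        simp only [Finset.mem_biUnion, Finset.mem_filter, Finset.mem_univ, true_and,
          not_exists, not_and] at hcon
        apply hnr
        apply reachIn_of_walk X _ (P ij.1 ij.2)
        intro v hv
        rw [hS]
        simp only [Finset.coe_sdiff, Finset.coe_univ, Set.mem_diff, Set.mem_univ,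
          true_and, Finset.mem_coe]
        exact fun hvC => hcon v hvC hv
      calc B.card ≤ (C.biUnion fun v =>
            Finset.univ.filter fun ij : V × V => v ∈ (P ij.1 ij.2).support).card :=
          Finset.card_le_card hsub
        _ ≤ ∑ v ∈ C, (Finset.univ.filter
            fun ij : V × V => v ∈ (P ij.1 ij.2).support).card :=
          Finset.card_biUnion_le
        _ ≤ ∑ v ∈ C, m := Finset.sum_le_sum fun v _ => by
            rw [hm]
            exact Finset.le_sup (f := fun v : V => (Finset.univ.filter
              fun ij : V × V => v ∈ (P ij.1 ij.2).support).card) (Finset.mem_univ v)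
        _ = C.card * m := by rw [Finset.sum_const, smul_eq_mul]
    -- combine
    have h8m : (0 : ℝ) < 8 * m := by positivity
    rw [div_le_iff₀ h8m]
    have hc4 : (4 : ℝ) * C.card ≤ n := by exact_mod_cast hC4
    have hlowR : 2 * ((S.card : ℝ) * S.card) ≤ 2 * B.card + S.card * n := by
      exact_mod_cast hlow
    have hupR : (B.card : ℝ) ≤ C.card * m := by exact_mod_cast hup
    have hSCR : (S.card : ℝ) + C.card = n := by exact_mod_cast hSC
    have hCnn : (0 : ℝ) ≤ C.card := by positivity
    have hnn : (0 : ℝ) ≤ n := by positivity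
    nlinarith [mul_nonneg hnn (by linarith : (0:ℝ) ≤ (n:ℝ) - 4 * C.card),
      sq_nonneg ((C.card : ℝ)), sq_nonneg ((n:ℝ) - 4 * C.card)]
  refine ⟨main, ?_⟩
  intro hcut
  have hne : {t | ∃ T : Finset V, IsHalfCutSet X Finset.univ T ∧ T.card = t}.Nonempty := by
    refine ⟨(Finset.univ : Finset V).card, Finset.univ, ⟨Finset.Subset.refl _, ?_⟩, rfl⟩
    intro v
    have he : X.compIn (↑((Finset.univ : Finset V) \ Finset.univ)) v = ∅ := by
      ext w
      simp [SimpleGraph.compIn, SimpleGraph.ReachIn]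
    rw [he]
    simp
  have hmem := Nat.sInf_mem hne
  obtain ⟨T, ⟨hTsub, hTcomp⟩, hTcard⟩ := hmem
  have hTcard' : T.card = cutHalf X Finset.univ := hTcard
  have := main T (by rw [hTcard']; exact hcut)
    (fun v => by simpa [Finset.card_univ] using hTcomp v)
  rwa [hTcard'] at this
end

section
/- Fix integers d ≥ 2, b ≥ 3, a set A ⊆ {0,...,b−1}, and 1 ≤ m ≤ d, and let N = Σ_{i=0}^{m−1} C(d−1, i)·|A|^i·(b−|A|)^{d−i−1}. In the graph Γ_k(d,b,A,m), the number of complete lines in the direction of the standard basis vector e_1 (i.e. the number of tuples (x_2,...,x_d) ∈ [0,b^k)^{d−1} such that the line {(t,x_2,...,x_d) : t ∈ [0,b^k)} is entirely contained in and connected in Γ_k(d,b,A,m)) is exactly N^k; such a line is complete if and only if for every digit position j < k, at most m−1 of the coordinates x_2,...,x_d have their j-th base-b digit in A. -/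
open scoped Classical

/-- Membership in the vertex set `V_k` of `Γ_k(d,b,A,m)`: all coordinates lie in `[0, b^k)`
and at every digit position `j < k`, at most `m` coordinates have their `j`-th base-`b`
digit in `A`. -/
def GenMem (d b : ℕ) (A : Finset ℕ) (m k : ℕ) (x : Fin d → ℕ) : Prop :=
  (∀ i, x i < b ^ k) ∧
    ∀ j < k, (Finset.univ.filter fun i : Fin d => digit b j (x i) ∈ A).card ≤ m

/-- The vertex set of `S(d,b,A,m) = ⋃ₖ Γ_k(d,b,A,m)`. -/
def GenS (d b : ℕ) (A : Finset ℕ) (m : ℕ) : Set (Fin d → ℕ) :=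
  {x | ∃ k, GenMem d b A m k x}

/-- The infinite graph `S(d,b,A,m)`, with edges between valid points at `ℓ¹`-distance 1. -/
def GenGraph (d b : ℕ) (A : Finset ℕ) (m : ℕ) : SimpleGraph (Fin d → ℕ) where
  Adj x y := x ∈ GenS d b A m ∧ y ∈ GenS d b A m ∧ (∑ i, |(x i : ℤ) - y i|) = 1
  symm := by
    constructor
    rintro x y ⟨hx, hy, h⟩
    refine ⟨hy, hx, ?_⟩
    rw [← h]
    exact Finset.sum_congr rfl fun i _ => abs_sub_comm _ _
  loopless := by constructor; rintro x ⟨-, -, h⟩; simp at h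

/-- The vertex set of `Γ_k(d,b,A,m)`. -/
noncomputable def GenGammaV (d b : ℕ) (A : Finset ℕ) (m k : ℕ) : Finset (Fin d → ℕ) :=
  (Fintype.piFinset fun _ : Fin d => Finset.range (b ^ k)).filter (GenMem d b A m k)

/-- The full line of length `b^k` through `x` in coordinate direction `i` is entirely
contained in `Γ_k(d,b,A,m)`. -/
def GenLineComplete (d b : ℕ) (A : Finset ℕ) (m k : ℕ) (i : Fin d) (x : Fin d → ℕ) : Prop :=
  ∀ t < b ^ k, GenMem d b A m k (Function.update x i t)

/-- The set of points of the full line of length `b^k` through `x` in direction `i`. -/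
def GenLineSet (d b k : ℕ) (i : Fin d) (x : Fin d → ℕ) : Set (Fin d → ℕ) :=
  {y | ∃ t < b ^ k, y = Function.update x i t}

/-- The vertex set of the complete-lines subgraph `C_k` of `Γ_k(d,b,A,m)`. -/
noncomputable def GenCkV (d b : ℕ) (A : Finset ℕ) (m k : ℕ) : Finset (Fin d → ℕ) :=
  (GenGammaV d b A m k).filter fun x => ∃ i : Fin d, GenLineComplete d b A m k i x

/-- `N`, the number of single-column digit configurations of `d-1` coordinates with at
most `m-1` digits in `A`. -/
def genN (d b : ℕ) (A : Finset ℕ) (m : ℕ) : ℕ :=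
  ∑ i ∈ Finset.range m, (d - 1).choose i * A.card ^ i * (b - A.card) ^ (d - i - 1)

/-! Moving along the line changes only the first coordinate, whose digit at position `j` can be
anything in `[0, b)`. So the whole line lies in `Γ_k` exactly when at every position at most `m - 1`
of the other coordinates have their digit in `A` (first coordinate `a * b ^ j` with `a ∈ A` is the
worst case), and a full line is a path, hence connected. Base-`b` expansion identifies
`[0, b^k)^(d-1)` with `k` independent digit columns in `[0, b)^(d-1)`, so the complete lines number
the `k`-th power of the admissible columns; these are counted by sorting them according to the set
of coordinates whose digit lies in `A`. -/

open Finset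

section ColumnCount

variable {ι α : Type*} [Fintype ι] [DecidableEq ι] [Fintype α] [DecidableEq α] (A : Finset α)

theorem card_fun_filter_mem_eq (I : Finset ι) :
    #{y : ι → α | univ.filter (fun i => y i ∈ A) = I} = #A ^ #I * #Aᶜ ^ #Iᶜ := by
  have hfiber : ({y : ι → α | univ.filter (fun i => y i ∈ A) = I} : Finset _)
      = Fintype.piFinset fun i => if i ∈ I then A else Aᶜ := by
    ext y
    simp only [mem_filter, mem_univ, true_and, Fintype.mem_piFinset, Finset.ext_iff]
    refine forall_congr' fun i => ?_
    by_cases hi : i ∈ I <;> simp [hi]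
  rw [hfiber, Fintype.card_piFinset, prod_apply_ite, prod_const, prod_const, filter_mem_eq_inter,
    univ_inter, filter_notMem_eq_sdiff, ← compl_eq_univ_sdiff]

theorem card_fun_card_filter_mem_eq (r : ℕ) :
    #{y : ι → α | #{i | y i ∈ A} = r}
      = (Fintype.card ι).choose r * #A ^ r * (Fintype.card α - #A) ^ (Fintype.card ι - r) := by
  rw [card_eq_sum_card_fiberwise (f := fun y => univ.filter fun i => y i ∈ A)
    (t := powersetCard r univ) (fun y hy => by simpa using (mem_filter.1 hy).2)]
  rw [sum_congr rfl fun I hI => ?_, sum_const, card_powersetCard, card_univ, smul_eq_mul, mul_assoc]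
  rw [mem_powersetCard_univ] at hI
  rw [filter_filter, filter_congr fun y _ => and_iff_right_of_imp fun h => h ▸ hI,
    card_fun_filter_mem_eq, card_compl, card_compl, hI]

theorem card_fun_card_filter_mem_lt (m : ℕ) :
    #{y : ι → α | #{i | y i ∈ A} < m}
      = ∑ r ∈ range m,
          (Fintype.card ι).choose r * #A ^ r * (Fintype.card α - #A) ^ (Fintype.card ι - r) := by
  rw [card_eq_sum_card_fiberwise (f := fun y => #{i | y i ∈ A}) (t := range m)
    (fun y hy => by simpa using (mem_filter.1 hy).2)]
  refine sum_congr rfl fun r hr => ?_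
  rw [filter_filter, filter_congr fun y _ => and_iff_right_of_imp fun h => h ▸ mem_range.1 hr,
    card_fun_card_filter_mem_eq]

end ColumnCount

theorem digit_finFunctionFinEquiv {b k : ℕ} (v : Fin k → Fin b) (j : Fin k) :
    digit b j (finFunctionFinEquiv v) = v j := by
  rw [digit, ← finFunctionFinEquiv_symm_apply_val, Equiv.symm_apply_apply]

theorem ncard_setOf_forall_digit {ι : Type*} [Fintype ι] (b k : ℕ) (P : (ι → ℕ) → Prop) :
    {x : ι → ℕ | (∀ i, x i < b ^ k) ∧ ∀ j < k, P fun i => digit b j (x i)}.ncard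
      = Nat.card {y : ι → Fin b // P fun i => y i} ^ k := by
  set f : (Fin k → {y : ι → Fin b // P fun i => y i}) → ι → ℕ :=
    fun c i => finFunctionFinEquiv fun j => (c j).1 i
  have hdigit (c) (i) (j : Fin k) : digit b j (f c i) = (c j).1 i :=
    digit_finFunctionFinEquiv _ j
  have hinj : f.Injective := fun c c' h =>
    funext fun j => Subtype.ext <| funext fun i => Fin.ext <| by rw [← hdigit, ← hdigit, h]
  have hrange : Set.range f
      = {x : ι → ℕ | (∀ i, x i < b ^ k) ∧ ∀ j < k, P fun i => digit b j (x i)} := by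
    ext x
    constructor
    · rintro ⟨c, rfl⟩
      refine ⟨fun i => (finFunctionFinEquiv _).isLt, fun j hj => ?_⟩
      simpa only [hdigit c _ ⟨j, hj⟩] using (c ⟨j, hj⟩).2
    · rintro ⟨hlt, hP⟩
      refine ⟨fun j => ⟨fun i => finFunctionFinEquiv.symm ⟨x i, hlt i⟩ j, ?_⟩, ?_⟩
      · simpa only [finFunctionFinEquiv_symm_apply_val, digit] using hP j j.2
      · funext i
        exact congrArg Fin.val (finFunctionFinEquiv.apply_symm_apply ⟨x i, hlt i⟩)
  rw [← hrange, Set.ncard_range_of_injective hinj, Nat.card_fun, Nat.card_fin]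

theorem card_filter_update {ι β : Type*} [Fintype ι] [DecidableEq ι] (p : β → Prop)
    [DecidablePred p] (x : ι → β) (i₀ : ι) (t : β) :
    #{i | p (Function.update x i₀ t i)} = #{i | i ≠ i₀ ∧ p (x i)} + if p t then 1 else 0 := by
  split_ifs with ht
  · rw [← card_insert_of_notMem (s := {i | i ≠ i₀ ∧ p (x i)}) (a := i₀) (by simp)]
    congr 1
    ext i
    rcases eq_or_ne i i₀ with rfl | hi <;> simp [*]
  · congr 1
    ext i
    rcases eq_or_ne i i₀ with rfl | hi <;> simp [*]

theorem digit_mul_pow {b a : ℕ} (hab : a < b) (j : ℕ) : digit b j (a * b ^ j) = a := by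
  rw [digit, Nat.mul_div_cancel _ (Nat.pow_pos (a.zero_le.trans_lt hab)), Nat.mod_eq_of_lt hab]

theorem genLineComplete_iff {d b m k : ℕ} {A : Finset ℕ} (hA : A ⊆ range b) (hm : 1 ≤ m)
    {i₀ : Fin d} {x : Fin d → ℕ} (hx : ∀ i ≠ i₀, x i < b ^ k) :
    GenLineComplete d b A m k i₀ x ↔
      ∀ j < k, #{i | i ≠ i₀ ∧ digit b j (x i) ∈ A} ≤ m - 1 := by
  have hcount (j t : ℕ) : #{i | digit b j (Function.update x i₀ t i) ∈ A}
      = #{i | i ≠ i₀ ∧ digit b j (x i) ∈ A} + if digit b j t ∈ A then 1 else 0 :=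
    card_filter_update (fun v => digit b j v ∈ A) x i₀ t
  constructor
  · intro h j hj
    obtain rfl | ⟨a, ha⟩ := A.eq_empty_or_nonempty
    · simp
    have hab : a < b := mem_range.1 (hA ha)
    have hlt : a * b ^ j < b ^ k := calc
      a * b ^ j < b ^ (j + 1) := by
        rw [pow_succ']; exact Nat.mul_lt_mul_of_pos_right hab (Nat.pow_pos (by omega))
      _ ≤ b ^ k := Nat.pow_le_pow_right (by omega) hj
    have := (h _ hlt).2 j hj
    rw [hcount, digit_mul_pow hab, if_pos ha] at this
    omega
  · intro h t ht
    refine ⟨fun i => ?_, fun j hj => ?_⟩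
    · rcases eq_or_ne i i₀ with rfl | hi
      · simpa using ht
      · simpa [hi] using hx i hi
    · rw [hcount]
      have := h j hj
      split_ifs <;> omega

theorem sum_abs_sub_update {ι : Type*} [Fintype ι] [DecidableEq ι] (x : ι → ℕ) (i₀ : ι)
    (s t : ℕ) :
    ∑ i, |(Function.update x i₀ s i : ℤ) - Function.update x i₀ t i| = |(s : ℤ) - t| := by
  rw [sum_eq_single i₀ (fun i _ hi => by simp [hi]) (by simp)]
  simp

theorem connected_induce_genLineSet {d b m k : ℕ} {A : Finset ℕ} (hb : 0 < b) {i₀ : Fin d}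
    {x : Fin d → ℕ} (hx : GenLineComplete d b A m k i₀ x) :
    ((GenGraph d b A m).induce (GenLineSet d b k i₀ x)).Connected := by
  let φ : SimpleGraph.pathGraph (b ^ k) →g (GenGraph d b A m).induce (GenLineSet d b k i₀ x) :=
    { toFun := fun t => ⟨Function.update x i₀ t, t, t.2, rfl⟩
      map_rel' := fun {s t} hst => by
        change (GenGraph d b A m).Adj (Function.update x i₀ s) (Function.update x i₀ t)
        refine ⟨⟨k, hx s s.2⟩, ⟨k, hx t t.2⟩, ?_⟩
        rw [sum_abs_sub_update]
        rcases SimpleGraph.pathGraph_adj.1 hst with h | h <;> simp [← h] }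
  have hφ : Function.Surjective φ := by
    rintro ⟨_, t, ht, rfl⟩
    exact ⟨⟨t, ht⟩, rfl⟩
  obtain ⟨n, hn⟩ := Nat.exists_eq_add_one_of_ne_zero (Nat.pow_pos (n := k) hb).ne'
  exact (hn ▸ SimpleGraph.pathGraph_connected n).map φ hφ

theorem natCard_column_eq_genN {n b : ℕ} {A : Finset ℕ} (hA : A ⊆ range b) (m : ℕ) :
    Nat.card {y : Fin n → Fin b // #{i | (y i : ℕ) ∈ A} < m} = genN (n + 1) b A m := by
  let A' : Finset (Fin b) := A.attachFin fun _ ha => mem_range.1 (hA ha)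
  have hA' (y : Fin n → Fin b) : #{i | y i ∈ A'} = #{i | (y i : ℕ) ∈ A} := by
    simp only [A', mem_attachFin]
  calc _ = Nat.card {y : Fin n → Fin b // #{i | y i ∈ A'} < m} := by simp only [hA']
    _ = _ := by
      rw [Nat.card_eq_fintype_card, Fintype.card_subtype, card_fun_card_filter_mem_lt,
        card_attachFin, Fintype.card_fin, Fintype.card_fin, genN]
      refine sum_congr rfl fun r _ => ?_
      rw [show n + 1 - r - 1 = n - r by omega, Nat.add_sub_cancel]

theorem card_filter_ne_zero_fin_succ {α : Type*} {n : ℕ} (p : α → Prop) [DecidablePred p]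
    (x : Fin (n + 1) → α) : #{i | i ≠ 0 ∧ p (x i)} = #{i | p (Fin.tail x i)} := by
  rw [Fin.card_filter_univ_succ']
  simp only [ne_eq, not_true_eq_false, false_and, if_false, zero_add, Fin.succ_ne_zero,
    not_false_eq_true, true_and]
  rfl

theorem ncard_setOf_head_eq_and_tail {α : Type*} {n : ℕ} (a : α) (Q : (Fin n → α) → Prop) :
    {x : Fin (n + 1) → α | x 0 = a ∧ Q (Fin.tail x)}.ncard = {y | Q y}.ncard := by
  have hcons : {x : Fin (n + 1) → α | x 0 = a ∧ Q (Fin.tail x)} = Fin.cons a '' {y | Q y} := by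
    ext x
    constructor
    · rintro ⟨rfl, hQ⟩
      exact ⟨Fin.tail x, hQ, Fin.cons_self_tail x⟩
    · rintro ⟨y, hy, rfl⟩
      simpa using hy
  rw [hcons, Set.ncard_image_of_injective _ (Fin.cons_right_injective (α := fun _ => α) a)]

/-- In `Γ_k(d,b,A,m)` the number of complete lines in direction `e₁` is exactly `N^k`,
where `N = Σ_{i<m} C(d-1,i)·|A|^i·(b-|A|)^(d-i-1)`; moreover such a line is complete iff
at every digit position `j < k` at most `m-1` of the coordinates `x₂,…,x_d` have their
`j`-th base-`b` digit in `A`. -/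
theorem complete_lines_count (d b m k : ℕ) (hd : 2 ≤ d) (hb : 3 ≤ b)
    (A : Finset ℕ) (hA : A ⊆ Finset.range b) (hm₁ : 1 ≤ m) :
    {x : Fin d → ℕ | x ⟨0, by omega⟩ = 0 ∧ (∀ i : Fin d, i ≠ ⟨0, by omega⟩ → x i < b ^ k) ∧
        GenLineComplete d b A m k ⟨0, by omega⟩ x ∧
        ((GenGraph d b A m).induce (GenLineSet d b k ⟨0, by omega⟩ x)).Connected}.ncard
      = genN d b A m ^ k ∧
    ∀ x : Fin d → ℕ, x ⟨0, by omega⟩ = 0 → (∀ i : Fin d, i ≠ ⟨0, by omega⟩ → x i < b ^ k) →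
      ((GenLineComplete d b A m k ⟨0, by omega⟩ x ∧
          ((GenGraph d b A m).induce (GenLineSet d b k ⟨0, by omega⟩ x)).Connected) ↔
        ∀ j < k, (Finset.univ.filter fun i : Fin d =>
          i ≠ ⟨0, by omega⟩ ∧ digit b j (x i) ∈ A).card ≤ m - 1) := by
  have hline (x : Fin d → ℕ) (hx : ∀ i : Fin d, i ≠ ⟨0, by omega⟩ → x i < b ^ k) :
      (GenLineComplete d b A m k ⟨0, by omega⟩ x ∧
          ((GenGraph d b A m).induce (GenLineSet d b k ⟨0, by omega⟩ x)).Connected) ↔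
        ∀ j < k, #{i | i ≠ ⟨0, by omega⟩ ∧ digit b j (x i) ∈ A} ≤ m - 1 :=
    ⟨fun h => (genLineComplete_iff hA hm₁ hx).1 h.1, fun h =>
      have hc := (genLineComplete_iff hA hm₁ hx).2 h
      ⟨hc, connected_induce_genLineSet (by omega) hc⟩⟩
  refine ⟨?_, fun x _ hx => hline x hx⟩
  obtain ⟨n, rfl⟩ : ∃ n, d = n + 1 := ⟨d - 1, by omega⟩
  calc _ = {x : Fin (n + 1) → ℕ | x 0 = 0 ∧ (∀ i, Fin.tail x i < b ^ k) ∧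
        ∀ j < k, #{i | digit b j (Fin.tail x i) ∈ A} < m}.ncard := by
        congr 1
        ext x
        have hlt : (∀ i : Fin (n + 1), i ≠ 0 → x i < b ^ k) ↔ ∀ i, Fin.tail x i < b ^ k := by
          simp [Fin.forall_fin_succ, Fin.tail]
        refine and_congr_right fun _ => (and_congr_right fun hx => (hline x hx).trans ?_).trans
          (and_congr_left' hlt)
        refine forall₂_congr fun j _ => ?_
        rw [Fin.zero_eta, card_filter_ne_zero_fin_succ (fun v => digit b j v ∈ A)]
        omega
    _ = Nat.card {y : Fin n → Fin b // #{i | (y i : ℕ) ∈ A} < m} ^ k :=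
      (ncard_setOf_head_eq_and_tail 0 _).trans
        (ncard_setOf_forall_digit b k fun c => #{i | c i ∈ A} < m)
    _ = genN (n + 1) b A m ^ k := by rw [natCard_column_eq_genN hA]
end
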